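/- arXiv:2504.10917 — 4 statements merged into one kernel-verified Lean document; each statement's English description precedes it below -/
import Mathlib

section
/- For every integer d ≥ 3, the RW(d)-SEG-WL test is strictly more expressive than the 1-WL test in testing non-isomorphic graphs. That is: (a) every pair of non-isomorphic finite simple graphs without isolated vertices that is distinguished by 1-WL is also distinguished by RW(d)-SEG-WL; and (b) there exists a pair of non-isomorphic finite simple graphs without isolated vertices that is distinguished by RW(d)-SEG-WL but not by 1-WL. -/
open scoped Classical

noncomputable section

/-- Color types for 1-WL (color refinement): the color at iteration `t+1` is a pair of the
previous color and the multiset of previous colors of the neighbors. -/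
def WLColorType : ℕ → Type
  | 0 => Unit
  | t + 1 => WLColorType t × Multiset (WLColorType t)

/-- 1-WL (color refinement) vertex colors. -/
def wlColor {V : Type} [Fintype V] (G : SimpleGraph V) : (t : ℕ) → V → WLColorType t
  | 0, _ => ()
  | t + 1, v => (wlColor G t v, (G.neighborFinset v).val.map (wlColor G t))

/-- The 1-WL test distinguishes two finite simple graphs if at some iteration the multisets of
vertex colors of the two graphs differ. -/
def wlDistinguishes {V W : Type} [Fintype V] [Fintype W]
    (G : SimpleGraph V) (H : SimpleGraph W) : Prop :=
  ∃ t, Finset.univ.val.map (wlColor G t) ≠ Finset.univ.val.map (wlColor H t)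

/-- Color types for the SEG-WL test with node encodings in `X` and edge encodings in `Y`. -/
def SEGColorType (X Y : Type) : ℕ → Type
  | 0 => X
  | t + 1 => Multiset (SEGColorType X Y t × Y)

/-- SEG-WL vertex colors: `g_0 v = f_P v` and
`g_{t+1} v = {{(g_t u, f_R v u) : u ∈ V}}`. -/
def segColor {V X Y : Type} [Fintype V] (fP : V → X) (fR : V → V → Y) :
    (t : ℕ) → V → SEGColorType X Y t
  | 0, v => fP v
  | t + 1, v => Finset.univ.val.map fun u => (segColor fP fR t u, fR v u)

/-- The SEG-WL test (with given encodings on the two graphs) distinguishes them if at some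
iteration the multisets of vertex colors differ. -/
def segDistinguishes {V W X Y : Type} [Fintype V] [Fintype W]
    (fP : V → X) (fR : V → V → Y) (fP' : W → X) (fR' : W → W → Y) : Prop :=
  ∃ t, Finset.univ.val.map (segColor fP fR t) ≠ Finset.univ.val.map (segColor fP' fR' t)

/-- The random-walk matrix `M = D⁻¹ A` of a simple graph:
`M i j = A i j / deg i`. -/
def rwMatrix {V : Type} [Fintype V] (G : SimpleGraph V) : Matrix V V ℝ :=
  Matrix.of fun i j => (if G.Adj i j then (1 : ℝ) else 0) / (G.degree i : ℝ)

/-- Node-level random-walk encoding `P_i = ((M^0)_{ii}, …, (M^{d-1})_{ii})`. -/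
def rwP {V : Type} [Fintype V] [DecidableEq V] (G : SimpleGraph V) (d : ℕ) (i : V) :
    Fin d → ℝ :=
  fun k => (rwMatrix G ^ (k : ℕ)) i i

/-- Edge-level random-walk encoding `R_{ij} = ((M^0)_{ij}, …, (M^{d-1})_{ij})`. -/
def rwR {V : Type} [Fintype V] [DecidableEq V] (G : SimpleGraph V) (d : ℕ) (i j : V) :
    Fin d → ℝ :=
  fun k => (rwMatrix G ^ (k : ℕ)) i j

/-- The RW(d)-SEG-WL test: SEG-WL with `f_P v_i = P_i` and `f_R v_i v_j = R_{ij}`. -/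
def rwSegDistinguishes {V W : Type} [Fintype V] [Fintype W] [DecidableEq V] [DecidableEq W]
    (d : ℕ) (G : SimpleGraph V) (H : SimpleGraph W) : Prop :=
  segDistinguishes (rwP G d) (rwR G d) (rwP H d) (rwR H d)



/-! ### Auxiliary material -/

/-- A default 1-WL color at each iteration. -/
def wlDefault : (t : ℕ) → WLColorType t
  | 0 => ()
  | t + 1 => (wlDefault t, 0)

/-- Decoding map from SEG-WL colors to 1-WL colors, given a "self test" `s` (detecting the
pair coming from the vertex itself) and a "neighbor test" `n` (detecting adjacency) on edge
encodings. -/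
noncomputable def phi {X Y : Type} (s n : Y → Prop) : (t : ℕ) → SEGColorType X Y t → WLColorType t
  | 0, _ => ()
  | t + 1, m =>
    (((Multiset.filter (fun p => s p.2) m).map (fun p => phi s n t p.1)).toList.headD
        (wlDefault t),
      (Multiset.filter (fun p => n p.2) m).map (fun p => phi s n t p.1))

lemma rwR_zero {V : Type} [Fintype V] [DecidableEq V] (G : SimpleGraph V) {d : ℕ}
    (hd : 0 < d) (v u : V) : rwR G d v u ⟨0, hd⟩ = if v = u then 1 else 0 := by
  simp [rwR, Matrix.one_apply]

lemma rwR_one {V : Type} [Fintype V] [DecidableEq V] (G : SimpleGraph V) {d : ℕ}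
    (hd : 1 < d) (v u : V) : rwR G d v u ⟨1, hd⟩ = rwMatrix G v u := by
  simp [rwR]

lemma rwR_two {V : Type} [Fintype V] [DecidableEq V] (G : SimpleGraph V) {d : ℕ}
    (hd : 2 < d) (v u : V) : rwR G d v u ⟨2, hd⟩ = (rwMatrix G ^ 2) v u := by
  simp [rwR]

lemma rwMatrix_ne_zero_iff {V : Type} [Fintype V] (G : SimpleGraph V) (v u : V) :
    rwMatrix G v u ≠ 0 ↔ G.Adj v u := by
  unfold rwMatrix
  simp only [Matrix.of_apply]
  by_cases h : G.Adj v u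
  · have hpos : 0 < G.degree v := (SimpleGraph.degree_pos_iff_exists_adj (G := G) v).mpr ⟨u, h⟩
    simp [h, hpos.ne']
  · simp [h]

/-- The decoding map `phi` recovers the 1-WL colors from the RW(d)-SEG-WL colors. -/
lemma phi_segColor {V : Type} [Fintype V] [DecidableEq V] {d : ℕ} (hd : 2 ≤ d)
    (G : SimpleGraph V) : ∀ (t : ℕ) (v : V),
    phi (fun y : Fin d → ℝ => y ⟨0, by omega⟩ = 1) (fun y : Fin d → ℝ => y ⟨1, by omega⟩ ≠ 0)
      t (segColor (rwP G d) (rwR G d) t v) = wlColor G t v := by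
  intro t
  induction t with
  | zero => intro v; rfl
  | succ t ih =>
    intro v
    show (_, _) = (_, _)
    simp only [segColor, phi, wlColor, Multiset.filter_map, Multiset.map_map]
    rw [Prod.mk.injEq]
    constructor
    case _ =>
      have h1 : Multiset.filter
          ((fun p : SEGColorType (Fin d → ℝ) (Fin d → ℝ) t × (Fin d → ℝ) =>
              p.2 ⟨0, by omega⟩ = 1) ∘
            fun u => (segColor (rwP G d) (rwR G d) t u, rwR G d v u)) Finset.univ.val
          = {v} := by
        have := Multiset.filter_congr (s := (Finset.univ.val : Multiset V))
          (p := (fun p : SEGColorType (Fin d → ℝ) (Fin d → ℝ) t × (Fin d → ℝ) =>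
              p.2 ⟨0, by omega⟩ = 1) ∘
            fun u => (segColor (rwP G d) (rwR G d) t u, rwR G d v u))
          (q := fun u => u = v)
          (fun u _ => by
            show rwR G d v u ⟨0, by omega⟩ = 1 ↔ u = v
            rw [rwR_zero (d := d) G (by omega) v u]
            constructor
            · intro h
              by_contra hne
              rw [if_neg (fun hvu => hne hvu.symm)] at h
              exact zero_ne_one h
            · rintro rfl; simp)
        rw [this, ← Finset.filter_val, Finset.filter_eq']
        simp
      rw [h1]
      simp only [Multiset.map_singleton, Multiset.toList_singleton, List.headD_cons]
      exact ih v
    case _ =>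
      have h2 : Multiset.filter
          ((fun p : SEGColorType (Fin d → ℝ) (Fin d → ℝ) t × (Fin d → ℝ) =>
              p.2 ⟨1, by omega⟩ ≠ 0) ∘
            fun u => (segColor (rwP G d) (rwR G d) t u, rwR G d v u)) Finset.univ.val
          = (G.neighborFinset v).val := by
        have := Multiset.filter_congr (s := (Finset.univ.val : Multiset V))
          (p := (fun p : SEGColorType (Fin d → ℝ) (Fin d → ℝ) t × (Fin d → ℝ) =>
              p.2 ⟨1, by omega⟩ ≠ 0) ∘
            fun u => (segColor (rwP G d) (rwR G d) t u, rwR G d v u))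
          (q := fun u => G.Adj v u)
          (fun u _ => by
            show rwR G d v u ⟨1, by omega⟩ ≠ 0 ↔ G.Adj v u
            rw [rwR_one (d := d) G (by omega) v u]
            exact rwMatrix_ne_zero_iff G v u)
        rw [this, ← Finset.filter_val, ← SimpleGraph.neighborFinset_eq_filter]
      exact Multiset.map_congr (by convert h2) (fun u _ => ih u)

/-- Part (a): 1-WL distinguishability implies RW(d)-SEG-WL distinguishability. -/
lemma partA {d : ℕ} (hd : 2 ≤ d) {V W : Type} [Fintype V] [Fintype W]
    [DecidableEq V] [DecidableEq W] (G : SimpleGraph V) (H : SimpleGraph W)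
    (hwl : wlDistinguishes G H) : rwSegDistinguishes d G H := by
  obtain ⟨t, ht⟩ := hwl
  refine ⟨t, fun hseg => ht ?_⟩
  calc Finset.univ.val.map (wlColor G t)
      = (Finset.univ.val.map (segColor (rwP G d) (rwR G d) t)).map
          (phi (fun y : Fin d → ℝ => y ⟨0, by omega⟩ = 1)
            (fun y : Fin d → ℝ => y ⟨1, by omega⟩ ≠ 0) t) := by
        rw [Multiset.map_map]
        exact Multiset.map_congr rfl (fun v _ => (phi_segColor hd G t v).symm)
    _ = (Finset.univ.val.map (segColor (rwP H d) (rwR H d) t)).map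
          (phi (fun y : Fin d → ℝ => y ⟨0, by omega⟩ = 1)
            (fun y : Fin d → ℝ => y ⟨1, by omega⟩ ≠ 0) t) := by rw [hseg]
    _ = Finset.univ.val.map (wlColor H t) := by
        rw [Multiset.map_map]
        exact Multiset.map_congr rfl (fun v _ => phi_segColor hd H t v)

/-! ### The counterexample: the 6-cycle vs. two disjoint triangles -/

/-- The 6-cycle. -/
def G6 : SimpleGraph (Fin 6) where
  Adj i j := i ≠ j ∧ (j = i + 1 ∨ i = j + 1)
  symm := ⟨fun i j h => ⟨h.1.symm, h.2.symm⟩⟩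
  loopless := ⟨fun i h => h.1 rfl⟩

/-- Two disjoint triangles. -/
def H6 : SimpleGraph (Fin 6) where
  Adj i j := i ≠ j ∧ (i : ℕ) / 3 = (j : ℕ) / 3
  symm := ⟨fun i j h => ⟨h.1.symm, h.2.symm⟩⟩
  loopless := ⟨fun i h => h.1 rfl⟩

instance : DecidableRel G6.Adj :=
  fun i j => decidable_of_iff (i ≠ j ∧ (j = i + 1 ∨ i = j + 1)) Iff.rfl

instance : DecidableRel H6.Adj :=
  fun i j => decidable_of_iff (i ≠ j ∧ (i : ℕ) / 3 = (j : ℕ) / 3) Iff.rfl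

lemma G6_degree (v : Fin 6) (inst : Fintype (G6.neighborSet v)) :
    @SimpleGraph.degree _ G6 v inst = 2 := by
  rw [Subsingleton.elim inst (G6.neighborSetFintype v)]
  clear inst; revert v; decide

lemma H6_degree (v : Fin 6) (inst : Fintype (H6.neighborSet v)) :
    @SimpleGraph.degree _ H6 v inst = 2 := by
  rw [Subsingleton.elim inst (H6.neighborSetFintype v)]
  clear inst; revert v; decide

lemma rwMatrix_G6 (i j : Fin 6) :
    rwMatrix G6 i j = if G6.Adj i j then 1 / 2 else 0 := by
  unfold rwMatrix
  simp only [Matrix.of_apply]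
  rw [G6_degree]
  split <;> norm_num

lemma rwMatrix_H6 (i j : Fin 6) :
    rwMatrix H6 i j = if H6.Adj i j then 1 / 2 else 0 := by
  unfold rwMatrix
  simp only [Matrix.of_apply]
  rw [H6_degree]
  split <;> norm_num

lemma G6_no_common : ∀ v u w : Fin 6, G6.Adj v u → ¬(G6.Adj v w ∧ G6.Adj w u) := by decide

lemma G6_sq (v u : Fin 6) (h : G6.Adj v u) : (rwMatrix G6 ^ 2) v u = 0 := by
  rw [sq, Matrix.mul_apply]
  apply Finset.sum_eq_zero
  intro w _
  rw [rwMatrix_G6, rwMatrix_G6]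
  by_cases h1 : G6.Adj v w
  · rw [if_neg (fun h2 => G6_no_common v u w h ⟨h1, h2⟩), mul_zero]
  · rw [if_neg h1, zero_mul]

lemma H6_one : rwMatrix H6 0 1 = 1 / 2 := by
  rw [rwMatrix_H6, if_pos (by decide)]

lemma H6_sq : (rwMatrix H6 ^ 2) 0 1 = 1 / 4 := by
  rw [sq, Matrix.mul_apply, Fin.sum_univ_six]
  simp only [rwMatrix_H6]
  rw [if_neg (by decide : ¬ H6.Adj 0 0), if_pos (by decide : H6.Adj 0 1),
    if_neg (by decide : ¬ H6.Adj 1 1), if_pos (by decide : H6.Adj 0 2),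
    if_pos (by decide : H6.Adj 2 1), if_neg (by decide : ¬ H6.Adj 0 3),
    if_neg (by decide : ¬ H6.Adj 0 4), if_neg (by decide : ¬ H6.Adj 0 5)]
  norm_num

/-- The constant 1-WL color of a `k`-regular graph. -/
def regc (k : ℕ) : (t : ℕ) → WLColorType t
  | 0 => ()
  | t + 1 => (regc k t, Multiset.replicate k (regc k t))

lemma wl_regular {V : Type} [Fintype V] (G : SimpleGraph V) (k : ℕ)
    (hk : ∀ (v : V) (inst : Fintype (G.neighborSet v)), @SimpleGraph.degree _ G v inst = k) :
    ∀ (t : ℕ) (v : V), wlColor G t v = regc k t := by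
  intro t
  induction t with
  | zero => intro v; rfl
  | succ t ih =>
    intro v
    show (wlColor G t v, (G.neighborFinset v).val.map (wlColor G t))
        = (regc k t, Multiset.replicate k (regc k t))
    rw [Prod.mk.injEq]
    refine ⟨ih v, ?_⟩
    have : Multiset.map (wlColor G t) (G.neighborFinset v).val
        = Multiset.map (fun _ => regc k t) (G.neighborFinset v).val :=
      Multiset.map_congr rfl (fun u _ => ih u)
    rw [this, Multiset.map_const']
    congr 1
    exact hk v _

lemma not_wl_G6_H6 : ¬ wlDistinguishes G6 H6 := by
  rintro ⟨t, ht⟩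
  apply ht
  have hG := wl_regular G6 2 (fun v inst => G6_degree v inst)
  have hH := wl_regular H6 2 (fun v inst => H6_degree v inst)
  rw [Multiset.map_congr rfl (fun v _ => hG t v),
    Multiset.map_congr rfl (fun v _ => hH t v)]

lemma G6_no_triangle : ¬ ∃ a b c : Fin 6, G6.Adj a b ∧ G6.Adj b c ∧ G6.Adj a c := by decide

lemma not_iso_G6_H6 : ¬ Nonempty (G6 ≃g H6) := by
  rintro ⟨e⟩
  refine G6_no_triangle ⟨e.symm 0, e.symm 1, e.symm 2, ?_, ?_, ?_⟩
  · exact e.symm.map_rel_iff.mpr (by decide : H6.Adj 0 1)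
  · exact e.symm.map_rel_iff.mpr (by decide : H6.Adj 1 2)
  · exact e.symm.map_rel_iff.mpr (by decide : H6.Adj 0 2)

lemma rwSeg_G6_H6 {d : ℕ} (hd : 3 ≤ d) : rwSegDistinguishes d G6 H6 := by
  refine ⟨1, fun h => ?_⟩
  have h0 : segColor (rwP H6 d) (rwR H6 d) 1 0 ∈
      Finset.univ.val.map (segColor (rwP H6 d) (rwR H6 d) 1) :=
    Multiset.mem_map_of_mem _ (Finset.mem_univ (0 : Fin 6))
  rw [← h] at h0
  obtain ⟨v, -, hv⟩ := Multiset.mem_map.mp h0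
  have hv' : Finset.univ.val.map (fun u => (rwP G6 d u, rwR G6 d v u))
      = Finset.univ.val.map (fun u => (rwP H6 d u, rwR H6 d 0 u)) := by
    have e1 : segColor (rwP G6 d) (rwR G6 d) 1 v
        = Finset.univ.val.map (fun u => (rwP G6 d u, rwR G6 d v u)) := rfl
    have e2 : segColor (rwP H6 d) (rwR H6 d) 1 0
        = Finset.univ.val.map (fun u => (rwP H6 d u, rwR H6 d 0 u)) := rfl
    rw [← e1, ← e2, hv]
  have hmem : ((rwP H6 d 1, rwR H6 d 0 1) : (Fin d → ℝ) × (Fin d → ℝ)) ∈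
      Finset.univ.val.map (fun u => (rwP H6 d u, rwR H6 d 0 u)) :=
    Multiset.mem_map_of_mem _ (Finset.mem_univ (1 : Fin 6))
  rw [← hv'] at hmem
  obtain ⟨u, -, hu⟩ := Multiset.mem_map.mp hmem
  have hR : rwR G6 d v u = rwR H6 d 0 1 := congrArg Prod.snd hu
  have e1 : rwMatrix G6 v u = 1 / 2 := by
    have := congrFun hR ⟨1, by omega⟩
    rw [rwR_one G6 (by omega) v u, rwR_one H6 (by omega) 0 1, H6_one] at this
    exact this
  have e2 : (rwMatrix G6 ^ 2) v u = 1 / 4 := by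
    have := congrFun hR ⟨2, by omega⟩
    rw [rwR_two G6 (by omega) v u, rwR_two H6 (by omega) 0 1, H6_sq] at this
    exact this
  have hadj : G6.Adj v u := (rwMatrix_ne_zero_iff G6 v u).mp (by rw [e1]; norm_num)
  rw [G6_sq v u hadj] at e2
  norm_num at e2


/-- For every integer `d ≥ 3`, RW(d)-SEG-WL is strictly more expressive than 1-WL:
(a) every pair of non-isomorphic finite simple graphs without isolated vertices that is
distinguished by 1-WL is also distinguished by RW(d)-SEG-WL, and (b) there exists such a pair
distinguished by RW(d)-SEG-WL but not by 1-WL. -/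
theorem rwSegWL_strictly_more_expressive_than_oneWL (d : ℕ) (hd : 3 ≤ d) :
    (∀ (V W : Type) [Fintype V] [Fintype W] [DecidableEq V] [DecidableEq W]
        (G : SimpleGraph V) (H : SimpleGraph W),
        (∀ v, ∃ u, G.Adj v u) → (∀ w, ∃ u, H.Adj w u) → ¬ Nonempty (G ≃g H) →
        wlDistinguishes G H → rwSegDistinguishes d G H) ∧
    (∃ (n m : ℕ) (G : SimpleGraph (Fin n)) (H : SimpleGraph (Fin m)),
        (∀ v, ∃ u, G.Adj v u) ∧ (∀ w, ∃ u, H.Adj w u) ∧ ¬ Nonempty (G ≃g H) ∧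
        rwSegDistinguishes d G H ∧ ¬ wlDistinguishes G H) := by
  constructor
  · intro V W _ _ _ _ G H _ _ _ hwl
    exact partA (by omega) G H hwl
  · exact ⟨6, 6, G6, H6, by decide, by decide, not_iso_G6_H6, rwSeg_G6_H6 hd, not_wl_G6_H6⟩


end
end

section
/- Two non-isomorphic finite simple graphs can be distinguished by the 1-WL test if and only if they can be distinguished by the Neighbor-SEG-WL test. -/
open scoped Classical

noncomputable section

/-- The Neighbor-SEG-WL test: SEG-WL where `f_P` is constant and `f_R u v = 1` if
`u` and `v` are adjacent and `2` otherwise. -/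
def neighborSegDistinguishes {V W : Type} [Fintype V] [Fintype W]
    (G : SimpleGraph V) (H : SimpleGraph W) : Prop :=
  segDistinguishes (fun _ : V => ()) (fun u v => if G.Adj u v then (1 : ℕ) else 2)
    (fun _ : W => ()) (fun u v => if H.Adj u v then (1 : ℕ) else 2)

abbrev NSeg {V : Type} [Fintype V] (G : SimpleGraph V) : (t : ℕ) → V → SEGColorType Unit ℕ t :=
  segColor (fun _ => ()) (fun u v => if G.Adj u v then (1:ℕ) else 2)

lemma nbr_val {V : Type} [Fintype V] (G : SimpleGraph V) (v : V) :
    (G.neighborFinset v).val = Multiset.filter (fun u => G.Adj v u) Finset.univ.val := by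
  classical
  rw [SimpleGraph.neighborFinset_eq_filter]
  simp [Finset.filter]

lemma lemA_step {U : Type} [Fintype U] (K : SimpleGraph U) (t : ℕ)
    (f : WLColorType t → SEGColorType Unit ℕ t) (Mglob : Multiset (SEGColorType Unit ℕ t))
    (hK : ∀ u, f (wlColor K t u) = NSeg K t u)
    (hM : Finset.univ.val.map (NSeg K t) = Mglob) (v : U) :
    (((wlColor K (t+1) v : WLColorType t × Multiset (WLColorType t)).2.map
        fun x => (f x, (1:ℕ)))
      + ((Mglob - (wlColor K (t+1) v : WLColorType t × Multiset (WLColorType t)).2.map f).map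
        fun x => (x, (2:ℕ))))
      = NSeg K (t+1) v := by
  show ((K.neighborFinset v).val.map (wlColor K t)).map (fun x => (f x, (1:ℕ)))
      + ((Mglob - ((K.neighborFinset v).val.map (wlColor K t)).map f).map fun x => (x, (2:ℕ)))
      = Finset.univ.val.map fun u => (NSeg K t u, if K.Adj v u then (1:ℕ) else 2)
  rw [Multiset.map_map, Multiset.map_map]
  have hmapf : Multiset.map ((fun x => f x) ∘ wlColor K t) (K.neighborFinset v).val
      = Multiset.map (NSeg K t) (Multiset.filter (fun u => K.Adj v u) Finset.univ.val) := by
    rw [nbr_val]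
    exact Multiset.map_congr rfl fun u _ => hK u
  have hsplit : Finset.univ.val
      = Multiset.filter (fun u => K.Adj v u) Finset.univ.val
        + Multiset.filter (fun u => ¬ K.Adj v u) Finset.univ.val :=
    (Multiset.filter_add_not _ _).symm
  have hsplitm : Multiset.map (NSeg K t) Finset.univ.val
      = Multiset.map (NSeg K t) (Multiset.filter (fun u => K.Adj v u) Finset.univ.val)
        + Multiset.map (NSeg K t) (Multiset.filter (fun u => ¬ K.Adj v u) Finset.univ.val) := by
    rw [← Multiset.map_add, Multiset.filter_add_not]
  have hsub : Mglob - Multiset.map ((fun x => f x) ∘ wlColor K t) (K.neighborFinset v).val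
      = Multiset.map (NSeg K t) (Multiset.filter (fun u => ¬ K.Adj v u) Finset.univ.val) := by
    rw [hmapf, ← hM, hsplitm, add_tsub_cancel_left]
  rw [hsub]
  conv_rhs => rw [hsplit, Multiset.map_add]
  congr 1
  · rw [nbr_val]
    refine Multiset.map_congr rfl fun u hu => ?_
    have hadj := (Multiset.mem_filter.mp hu).2
    simp [Function.comp, hK u, hadj]
  · rw [Multiset.map_map]
    refine Multiset.map_congr rfl fun u hu => ?_
    have hadj := (Multiset.mem_filter.mp hu).2
    simp [Function.comp, hadj]

lemma lemA {V W : Type} [Fintype V] [Fintype W] (G : SimpleGraph V) (H : SimpleGraph W)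
    (h : ∀ t, Finset.univ.val.map (wlColor G t) = Finset.univ.val.map (wlColor H t)) :
    ∀ t : ℕ, ∃ f : WLColorType t → SEGColorType Unit ℕ t,
      (∀ v, f (wlColor G t v) = NSeg G t v) ∧ (∀ w, f (wlColor H t w) = NSeg H t w) := by
  intro t
  induction t with
  | zero =>
    exact ⟨fun _ => (), fun v => rfl, fun w => rfl⟩
  | succ t ih =>
    obtain ⟨f, hfG, hfH⟩ := ih
    set Mglob : Multiset (SEGColorType Unit ℕ t) :=
      Finset.univ.val.map (NSeg G t) with hMdef
    have hMG : Finset.univ.val.map (NSeg G t) = Mglob := rfl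
    have hMH : Finset.univ.val.map (NSeg H t) = Mglob := by
      have e1 : Finset.univ.val.map (NSeg H t) = (Finset.univ.val.map (wlColor H t)).map f := by
        rw [Multiset.map_map]; exact Multiset.map_congr rfl (fun w _ => (hfH w).symm)
      have e2 : Finset.univ.val.map (NSeg G t) = (Finset.univ.val.map (wlColor G t)).map f := by
        rw [Multiset.map_map]; exact Multiset.map_congr rfl (fun v _ => (hfG v).symm)
      rw [hMdef, e1, e2, h t]
    exact ⟨fun c => ((c : WLColorType t × Multiset (WLColorType t)).2.map fun x => (f x, (1:ℕ)))
        + ((Mglob - c.2.map f).map fun x => (x, (2:ℕ))),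
      lemA_step G t f Mglob hfG hMG, lemA_step H t f Mglob hfH hMH⟩

lemma lemB : ∀ t : ℕ, ∃ (f : SEGColorType Unit ℕ (t+1) → WLColorType t)
    (g : SEGColorType Unit ℕ (t+1) → SEGColorType Unit ℕ t),
    ∀ (V : Type) [Fintype V] (G : SimpleGraph V) (v : V),
      f (NSeg G (t+1) v) = wlColor G t v ∧ g (NSeg G (t+1) v) = NSeg G t v := by
  intro t
  induction t with
  | zero => exact ⟨fun _ => (), fun _ => (), fun V _ G v => ⟨rfl, rfl⟩⟩
  | succ t ih =>
    obtain ⟨f, g, hfg⟩ := ih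
    refine ⟨fun m => (f (Multiset.map (fun p => (g p.1, p.2)) m),
        Multiset.map (fun p => f p.1) (Multiset.filter (fun p => p.2 = 1) m)),
      fun m => Multiset.map (fun p => (g p.1, p.2)) m, ?_⟩
    intro V _ G v
    have hg : Multiset.map (fun p => (g p.1, p.2))
        (NSeg G (t+2) v : SEGColorType Unit ℕ (t+2)) = NSeg G (t+1) v := by
      show Multiset.map _ (Finset.univ.val.map fun u => (NSeg G (t+1) u, if G.Adj v u then (1:ℕ) else 2)) = _
      rw [Multiset.map_map]
      refine Multiset.map_congr rfl fun u _ => ?_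
      simp [(hfg V G u).2]
    refine ⟨?_, hg⟩
    show (f (Multiset.map (fun p => (g p.1, p.2)) (NSeg G (t+2) v)),
      Multiset.map (fun p => f p.1) (Multiset.filter (fun p => p.2 = 1) (NSeg G (t+2) v)))
      = (wlColor G t v, (G.neighborFinset v).val.map (wlColor G t))
    rw [hg, (hfg V G v).1]
    refine Prod.ext rfl ?_
    show Multiset.map (fun p => f p.1) (Multiset.filter (fun p => p.2 = 1)
      (Finset.univ.val.map fun u => (NSeg G (t+1) u, if G.Adj v u then (1:ℕ) else 2))) = _
    rw [Multiset.filter_map, Multiset.map_map]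
    rw [nbr_val]
    have hfe : Multiset.filter ((fun p : SEGColorType Unit ℕ (t+1) × ℕ => p.2 = 1) ∘
        (fun u => (NSeg G (t+1) u, if G.Adj v u then (1:ℕ) else 2))) Finset.univ.val
        = Multiset.filter (fun u => G.Adj v u) Finset.univ.val := by
      refine Multiset.filter_congr fun u _ => ?_
      by_cases h : G.Adj v u <;> simp [h]
    rw [hfe]
    exact Multiset.map_congr rfl fun u _ => (hfg V G u).1

lemma mapNSeg_eq {U : Type} [Fintype U] (K : SimpleGraph U) {t : ℕ}
    {f : WLColorType t → SEGColorType Unit ℕ t} (hK : ∀ u, f (wlColor K t u) = NSeg K t u) :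
    Finset.univ.val.map (NSeg K t) = (Finset.univ.val.map (wlColor K t)).map f := by
  rw [Multiset.map_map]; exact Multiset.map_congr rfl fun u _ => (hK u).symm

lemma mapWL_eq {U : Type} [Fintype U] (K : SimpleGraph U) {t : ℕ}
    {f : SEGColorType Unit ℕ (t+1) → WLColorType t} (hK : ∀ u, f (NSeg K (t+1) u) = wlColor K t u) :
    Finset.univ.val.map (wlColor K t) = (Finset.univ.val.map (NSeg K (t+1))).map f := by
  rw [Multiset.map_map]; exact Multiset.map_congr rfl fun u _ => (hK u).symm

/-- Two non-isomorphic finite simple graphs can be distinguished by the 1-WL test iff they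
can be distinguished by the Neighbor-SEG-WL test. -/
theorem oneWL_iff_neighborSegWL (V W : Type) [Fintype V] [Fintype W]
    (G : SimpleGraph V) (H : SimpleGraph W) (hiso : ¬ Nonempty (G ≃g H)) :
    wlDistinguishes G H ↔ neighborSegDistinguishes G H := by
  rw [← not_iff_not]
  unfold wlDistinguishes neighborSegDistinguishes segDistinguishes
  push_neg
  show (∀ t, Finset.univ.val.map (wlColor G t) = Finset.univ.val.map (wlColor H t)) ↔
    (∀ t, Finset.univ.val.map (NSeg G t) = Finset.univ.val.map (NSeg H t))
  constructor
  · intro h t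
    obtain ⟨f, hfG, hfH⟩ := lemA G H h t
    rw [mapNSeg_eq G hfG, mapNSeg_eq H hfH, h t]
  · intro h t
    obtain ⟨f, g, hfg⟩ := lemB t
    rw [mapWL_eq G (fun u => (hfg V G u).1), mapWL_eq H (fun u => (hfg W H u).1), h (t+1)]

end
end

section
/- Let G and H be finite simple graphs, let (f_P, f_R) and (f_P', f_R') be node-level and edge-level encodings defined on both graphs, and suppose there are functions ψ and φ such that f_P' = ψ ∘ f_P and f_R' = φ ∘ f_R on both graphs. If the SEG-WL test with encodings (f_P', f_R') distinguishes G from H, then the SEG-WL test with encodings (f_P, f_R) also distinguishes G from H. -/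
open scoped Classical

noncomputable section

/-- Map colors along `ψ` and `φ`. -/
def segMap {X Y X' Y' : Type} (ψ : X → X') (φ : Y → Y') :
    (t : ℕ) → SEGColorType X Y t → SEGColorType X' Y' t
  | 0, x => ψ x
  | t + 1, m => m.map fun p => (segMap ψ φ t p.1, φ p.2)

lemma segColor_map {V X Y X' Y' : Type} [Fintype V] (fP : V → X) (fR : V → V → Y)
    (ψ : X → X') (φ : Y → Y') :
    ∀ t v, segColor (fun v => ψ (fP v)) (fun u v => φ (fR u v)) t v
      = segMap ψ φ t (segColor fP fR t v) := by
  intro t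
  induction t with
  | zero => intro v; rfl
  | succ t ih =>
    intro v
    show _ = Multiset.map _ (Multiset.map _ _)
    rw [Multiset.map_map]
    simp only [segColor, Function.comp]
    exact Multiset.map_congr rfl fun u _ => by rw [ih]

/-- If the node- and edge-level encodings `(f_P', f_R')` factor through `(f_P, f_R)` via
functions `ψ` and `φ` on both graphs, and SEG-WL with `(f_P', f_R')` distinguishes the two
graphs, then SEG-WL with `(f_P, f_R)` also distinguishes them. -/
theorem segWL_distinguishes_of_factor (V W X Y X' Y' : Type) [Fintype V] [Fintype W]
    (G : SimpleGraph V) (H : SimpleGraph W)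
    (fP : V → X) (fR : V → V → Y) (fP₂ : W → X) (fR₂ : W → W → Y)
    (ψ : X → X') (φ : Y → Y')
    (h : segDistinguishes (fun v => ψ (fP v)) (fun u v => φ (fR u v))
          (fun w => ψ (fP₂ w)) (fun u v => φ (fR₂ u v))) :
    segDistinguishes fP fR fP₂ fR₂ := by
  obtain ⟨t, ht⟩ := h
  refine ⟨t, fun hEq => ht ?_⟩
  calc Finset.univ.val.map (segColor (fun v => ψ (fP v)) (fun u v => φ (fR u v)) t)
      = (Finset.univ.val.map (segColor fP fR t)).map (segMap ψ φ t) := by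
        rw [Multiset.map_map]; exact Multiset.map_congr rfl fun v _ => segColor_map fP fR ψ φ t v
    _ = (Finset.univ.val.map (segColor fP₂ fR₂ t)).map (segMap ψ φ t) := by rw [hEq]
    _ = Finset.univ.val.map (segColor (fun v => ψ (fP₂ v)) (fun u v => φ (fR₂ u v)) t) := by
        rw [Multiset.map_map]
        exact (Multiset.map_congr rfl fun v _ => (segColor_map fP₂ fR₂ ψ φ t v).symm)

end
end

section
/- If two non-isomorphic finite connected simple graphs can be distinguished by the 1-WL test, then they can be distinguished by the SPD-SEG-WL test. -/
open scoped Classical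

noncomputable section

/-- The SPD-SEG-WL test: SEG-WL where `f_P` is constant and `f_R u v` is the
shortest-path distance between `u` and `v`. -/
def spdSegDistinguishes {V W : Type} [Fintype V] [Fintype W]
    (G : SimpleGraph V) (H : SimpleGraph W) : Prop :=
  segDistinguishes (fun _ : V => ()) (fun u v => G.dist u v)
    (fun _ : W => ()) (fun u v => H.dist u v)

/-- Reconstruction of a 1-WL color from an SPD-SEG-WL color (auxiliary form, taking the
multiset directly). -/
def phiWLAux (t : ℕ) (phiPrev : SEGColorType Unit ℕ t → WLColorType t)
    (m : Multiset (SEGColorType Unit ℕ t × ℕ)) : WLColorType (t + 1) :=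
  (if h : ∃ p ∈ m, p.2 = 0 then phiPrev h.choose.1 else wlDefault t,
   (m.filter (fun p => p.2 = 1)).map (fun p => phiPrev p.1))

/-- Reconstruction of a 1-WL color from an SPD-SEG-WL color. -/
def phiWL : (t : ℕ) → SEGColorType Unit ℕ t → WLColorType t
  | 0, _ => ()
  | t + 1, m => phiWLAux t (phiWL t) m

lemma phiWL_segColor {V : Type} [Fintype V] (G : SimpleGraph V) (hG : G.Connected) :
    ∀ (t : ℕ) (v : V),
      phiWL t (segColor (fun _ : V => ()) (fun u v => G.dist u v) t v) = wlColor G t v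
  | 0, _ => rfl
  | t + 1, v => by
    set f := segColor (fun _ : V => ()) (fun u v => G.dist u v) t with hf
    show phiWLAux t (phiWL t) (Finset.univ.val.map (fun u => (f u, G.dist v u)))
      = (wlColor G t v, (G.neighborFinset v).val.map (wlColor G t))
    unfold phiWLAux
    have h : ∃ p ∈ Finset.univ.val.map (fun u => (f u, G.dist v u)), p.2 = 0 :=
      ⟨(f v, G.dist v v), Multiset.mem_map.2 ⟨v, Finset.mem_univ v, by simp⟩, by
        simp [SimpleGraph.dist_self]⟩
    rw [dif_pos h]
    refine Prod.ext ?_ ?_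
    · obtain ⟨hmem, h0⟩ := h.choose_spec
      obtain ⟨u, -, hu⟩ := Multiset.mem_map.1 hmem
      have h0' : G.dist v u = 0 := by rw [← hu] at h0; exact h0
      have hvu : v = u := ((hG v u).dist_eq_zero_iff).1 h0'
      have h1 : h.choose.1 = f u := by rw [← hu]
      show phiWL t h.choose.1 = wlColor G t v
      rw [h1, hf, phiWL_segColor G hG t u, hvu]
    · show ((Finset.univ.val.map (fun u => (f u, G.dist v u))).filter
          (fun p => p.2 = 1)).map (fun p => phiWL t p.1)
        = (G.neighborFinset v).val.map (wlColor G t)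
      rw [Multiset.filter_map, Multiset.map_map]
      have hfil : Multiset.filter ((fun p : SEGColorType Unit ℕ t × ℕ => p.2 = 1) ∘
          (fun u => (f u, G.dist v u))) Finset.univ.val
          = Multiset.filter (fun u => G.Adj v u) Finset.univ.val := by
        apply Multiset.filter_congr
        intro u _
        simp only [Function.comp]
        exact SimpleGraph.dist_eq_one_iff_adj
      rw [hfil]
      have hnbr : (G.neighborFinset v).val = Multiset.filter (fun u => G.Adj v u)
          Finset.univ.val := by
        rw [SimpleGraph.neighborFinset_eq_filter, Finset.filter_val]
      rw [hnbr]
      apply Multiset.map_congr rfl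
      intro u _
      simp only [Function.comp]
      exact phiWL_segColor G hG t u

/-- If two non-isomorphic finite connected simple graphs can be distinguished by the 1-WL
test, then they can be distinguished by the SPD-SEG-WL test. -/
theorem oneWL_distinguishes_imp_spdSegWL_distinguishes
    (V W : Type) [Fintype V] [Fintype W]
    (G : SimpleGraph V) (H : SimpleGraph W)
    (hGc : G.Connected) (hHc : H.Connected)
    (hiso : ¬ Nonempty (G ≃g H)) (hwl : wlDistinguishes G H) :
    spdSegDistinguishes G H := by
  obtain ⟨t, hne⟩ := hwl
  refine ⟨t, fun hseg => hne ?_⟩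
  calc Finset.univ.val.map (wlColor G t)
      = (Finset.univ.val.map (segColor (fun _ : V => ()) (fun u v => G.dist u v) t)).map
          (phiWL t) := by
        rw [Multiset.map_map]
        exact (Multiset.map_congr rfl fun v _ => (phiWL_segColor G hGc t v).symm)
    _ = (Finset.univ.val.map (segColor (fun _ : W => ()) (fun u v => H.dist u v) t)).map
          (phiWL t) := by rw [hseg]
    _ = Finset.univ.val.map (wlColor H t) := by
        rw [Multiset.map_map]
        exact Multiset.map_congr rfl fun v _ => phiWL_segColor H hHc t v

end
end
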